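/- Let 2 ≤ a < b, and let R_a ⊆ V^{⊗a}, R_b ⊆ V^{⊗b} be subspaces such that R = R_a ⊕ R_b satisfies the minimality condition. Then the extra conditions (e.c.) hold if and only if for all 2 ≤ m ≤ a−1 and 2 ≤ h ≤ b−1 the triples (V^{⊗m}⊗R_a, R_a⊗V^{⊗m}, Σ_{j=1}^{m-1} V^{⊗j}⊗R_a⊗V^{⊗(m-j)}) and (V^{⊗h}⊗R_b, R_b⊗V^{⊗h}, Σ_{j=1}^{h-1} V^{⊗j}⊗R_b⊗V^{⊗(h-j)}) are distributive, and the inclusions (V^{⊗m}⊗R_a) ∩ (R_a⊗V^{⊗m}) ⊆ V^{⊗(m-1)}⊗R_a⊗V and (V^{⊗h}⊗R_b) ∩ (R_b⊗V^{⊗h}) ⊆ V^{⊗(h-1)}⊗R_b⊗V hold. -/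

import Mathlib

/-!
STATEMENT 15 (Proposition `prop:eciffdistributivity`): the extra conditions (e.c.) hold
if and only if certain triples of subspaces are distributive and certain inclusions hold.

We model the tensor algebra `T(V)` on a finite-dimensional vector space `V` (with basis
`ι`) as the monoid algebra on the free monoid on `ι`; the tensor power `V^{⊗n}` is the
span `Wpow n` of the words of length `n`, and subspaces such as `V^{⊗j} ⊗ R ⊗ V^{⊗m}`
are products of submodules inside this algebra.
-/

noncomputable section

namespace MK

variable (k : Type) [Field k] (ι : Type)

/-- The tensor algebra `T(V)` on the vector space `V` with basis `ι`. -/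
abbrev T := MonoidAlgebra k (FreeMonoid ι)

/-- The basis element of `T(V)` corresponding to a word. -/
def word (w : FreeMonoid ι) : T k ι := MonoidAlgebra.of k (FreeMonoid ι) w

/-- The tensor power `V^{⊗n}` inside `T(V)`. -/
def Wpow (n : ℕ) : Submodule k (T k ι) :=
  Submodule.span k {x | ∃ w : FreeMonoid ι, w.length = n ∧ x = word k ι w}

/-- The irrelevant ideal `T(V)_{>0}`. -/
def Tpos : Submodule k (T k ι) :=
  Submodule.span k {x | ∃ w : FreeMonoid ι, 1 ≤ w.length ∧ x = word k ι w}

/-- The two-sided ideal `I = ⟨Rt⟩` generated by a subspace `Rt` of `T(V)`. -/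
def Isub (Rt : Submodule k (T k ι)) : Submodule k (T k ι) := ⊤ * Rt * ⊤

/-- The minimality condition: `Rt` projects isomorphically onto
`I/(T(V)_{>0}·I + I·T(V)_{>0})`, where `I = ⟨Rt⟩`. -/
def Minimality (Rt : Submodule k (T k ι)) : Prop :=
  Disjoint Rt (Tpos k ι * Isub k ι Rt ⊔ Isub k ι Rt * Tpos k ι) ∧
    Rt ⊔ (Tpos k ι * Isub k ι Rt ⊔ Isub k ι Rt * Tpos k ι) = Isub k ι Rt

/-- A triple `(E, F₁, F₂)` of subspaces is distributive if
`E ∩ (F₁ + F₂) = (E ∩ F₁) + (E ∩ F₂)`. -/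
def DistribTriple (E F₁ F₂ : Submodule k (T k ι)) : Prop :=
  E ⊓ (F₁ ⊔ F₂) = (E ⊓ F₁) ⊔ (E ⊓ F₂)

/-- The extra condition in degree `s` for a relation space `Rs ⊆ V^{⊗s}`:
`(V^{⊗(s-1)}⊗R_s) ∩ (Σ_{j=0}^{s-2} V^{⊗j}⊗R_s⊗V^{⊗(s-1-j)}) = V^{⊗(s-2)}⊗J̄_{s+1}^s`,
where `J̄_{s+1}^s = (V⊗R_s) ∩ (R_s⊗V)`. -/
def EC (Rs : Submodule k (T k ι)) (s : ℕ) : Prop :=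
  (Wpow k ι (s - 1) * Rs) ⊓
      (⨆ j ∈ Finset.range (s - 1), Wpow k ι j * Rs * Wpow k ι (s - 1 - j)) =
    Wpow k ι (s - 2) * ((Wpow k ι 1 * Rs) ⊓ (Rs * Wpow k ι 1))

/-!
Write `P_n = (V^{⊗n}⊗R) ∩ Σ_{j<n} V^{⊗j}⊗R⊗V^{⊗(n-j)}` (`overlap R n`), so that e.c. in
degree `s` says `P_{s-1} = V^{⊗(s-2)}⊗P_1`. Left multiplication by `V^{⊗t}` commutes with
intersections and can be cancelled (strip a prefix word), and `V⊗P_n ⊆ P_{n+1}`; hence e.c. is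
equivalent to `P_n = V^{⊗(n-1)}⊗P_1` for all `1 ≤ n ≤ s-1`, i.e. to `P_{n+1} = V⊗P_n` for
`1 ≤ n ≤ s-2`. Now `V⊗P_n = (V^{⊗(n+1)}⊗R) ∩ Σ_{j=1}^{n} V^{⊗j}⊗R⊗V^{⊗(n+1-j)}`, so
`P_{n+1} = V⊗P_n` is the distributivity of the triple in degree `n+1` as soon as the inclusion
holds there, and the inclusion follows from `P_m = V^{⊗(m-1)}⊗P_1 ⊆ V^{⊗(m-1)}⊗R⊗V`.
-/

variable {k ι}

section Words

lemma word_mul (u v : FreeMonoid ι) : word k ι (u * v) = word k ι u * word k ι v :=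
  map_mul _ _ _

lemma word_one : word k ι 1 = 1 := map_one _

lemma word_mul_single (u w : FreeMonoid ι) (c : k) :
    word k ι u * MonoidAlgebra.single w c = MonoidAlgebra.single (u * w) c := by
  rw [word, MonoidAlgebra.of_apply, MonoidAlgebra.single_mul_single, one_mul]

lemma wpow_zero : Wpow k ι 0 = 1 := by
  rw [Wpow, Submodule.one_eq_span]
  congr 1
  ext x
  simp only [FreeMonoid.length_eq_zero, exists_eq_left, word_one, Set.mem_ofPred_eq,
    Set.mem_singleton_iff]

lemma wpow_mul_wpow (m n : ℕ) : Wpow k ι m * Wpow k ι n = Wpow k ι (m + n) := by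
  rw [Wpow, Wpow, Wpow, Submodule.span_mul_span]
  congr 1
  ext x
  rw [Set.mem_mul]
  constructor
  · rintro ⟨_, ⟨u, rfl, rfl⟩, _, ⟨v, rfl, rfl⟩, rfl⟩
    exact ⟨u * v, FreeMonoid.length_mul u v, (word_mul u v).symm⟩
  · rintro ⟨w, hw, rfl⟩
    have hlen : w.toList.length = m + n := hw
    refine ⟨_, ⟨FreeMonoid.ofList (w.toList.take m), ?_, rfl⟩,
      _, ⟨FreeMonoid.ofList (w.toList.drop m), ?_, rfl⟩, ?_⟩
    · simp [FreeMonoid.length, hlen]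
    · simp [FreeMonoid.length, hlen]
    · rw [← word_mul, ← FreeMonoid.ofList_append, List.take_append_drop, FreeMonoid.ofList_toList]

lemma wpow_mul_wpow_mul (i j : ℕ) (X : Submodule k (T k ι)) :
    Wpow k ι i * (Wpow k ι j * X) = Wpow k ι (i + j) * X := by
  rw [← mul_assoc, wpow_mul_wpow]

lemma wpow_eq_bot [IsEmpty ι] {n : ℕ} (hn : n ≠ 0) : Wpow k ι n = ⊥ := by
  rw [Wpow, Submodule.span_eq_bot]
  rintro _ ⟨w, hw, rfl⟩
  rw [Subsingleton.elim w 1, FreeMonoid.length_one] at hw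
  exact absurd hw.symm hn

end Words

section DropPrefix

/-- The coefficient of `u * w` in `dropPrefix u f` is the coefficient of `w` in `f`. -/
def dropPrefix (u : FreeMonoid ι) : T k ι →ₗ[k] T k ι :=
  (MonoidAlgebra.coeffLinearEquiv k).symm.toLinearMap ∘ₗ
    Finsupp.lcomapDomain (u * ·) (mul_right_injective u) ∘ₗ
    (MonoidAlgebra.coeffLinearEquiv k).toLinearMap

lemma dropPrefix_word_mul (u : FreeMonoid ι) (f : T k ι) :
    dropPrefix u (word k ι u * f) = f := by
  have h : dropPrefix (k := k) u ∘ₗ LinearMap.mulLeft k (word k ι u) = LinearMap.id := by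
    refine MonoidAlgebra.lhom_ext' fun w => LinearMap.ext fun c => ?_
    change dropPrefix u (word k ι u * MonoidAlgebra.single w c) = MonoidAlgebra.single w c
    rw [word_mul_single]
    exact congrArg MonoidAlgebra.ofCoeff <|
      Finsupp.comapDomain_single (u * ·) w c (mul_right_injective u).injOn
  exact LinearMap.congr_fun h f

lemma dropPrefix_word_mul_of_ne {u v : FreeMonoid ι} (hlen : u.length = v.length) (hne : u ≠ v)
    (f : T k ι) : dropPrefix u (word k ι v * f) = 0 := by
  have h : dropPrefix (k := k) u ∘ₗ LinearMap.mulLeft k (word k ι v) = 0 := by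
    refine MonoidAlgebra.lhom_ext' fun w => LinearMap.ext fun c => ?_
    change dropPrefix u (word k ι v * MonoidAlgebra.single w c) = 0
    rw [word_mul_single]
    ext w'
    change Finsupp.comapDomain _ _ _ w' = _
    rw [Finsupp.comapDomain_apply]
    refine Finsupp.single_eq_of_ne fun hvw => hne ?_
    have happ : u.toList ++ w'.toList = v.toList ++ w.toList := congrArg FreeMonoid.toList hvw
    exact FreeMonoid.toList.injective (List.append_inj happ hlen).1
  simpa using LinearMap.congr_fun h f

variable {m : ℕ} {X Y : Submodule k (T k ι)} {z : T k ι}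

lemma mem_wpow_mul_iff_exists_finsupp :
    z ∈ Wpow k ι m * X ↔ ∃ f : {w : FreeMonoid ι // w.length = m} →₀ T k ι,
      (∀ u, f u ∈ X) ∧ z = f.sum fun u x => word k ι u.1 * x := by
  refine ⟨fun hz => ?_, ?_⟩
  · induction hz using Submodule.mul_induction_on' with
    | mem_mul_mem g hg x hx =>
      induction hg using Submodule.span_induction with
      | mem g hg =>
        obtain ⟨w, hw, rfl⟩ := hg
        refine ⟨Finsupp.single ⟨w, hw⟩ x, fun u => ?_, by simp⟩
        rcases eq_or_ne u ⟨w, hw⟩ with rfl | hu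
        · simpa using hx
        · simp [Finsupp.single_eq_of_ne hu]
      | zero => exact ⟨0, by simp, by simp⟩
      | add g g' _ _ hg hg' =>
        obtain ⟨f, hf, hfx⟩ := hg
        obtain ⟨f', hf', hf'x⟩ := hg'
        refine ⟨f + f', fun u => add_mem (hf u) (hf' u), ?_⟩
        rw [add_mul, hfx, hf'x, Finsupp.sum_add_index' (by simp) (fun _ _ _ => mul_add _ _ _)]
      | smul c g _ hg =>
        obtain ⟨f, hf, hfx⟩ := hg
        refine ⟨c • f, fun u => X.smul_mem c (hf u), ?_⟩
        rw [smul_mul_assoc, hfx, Finsupp.sum_smul_index' (by simp), Finsupp.smul_sum]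
        simp only [mul_smul_comm]
    | add z z' _ _ hz hz' =>
      obtain ⟨f, hf, rfl⟩ := hz
      obtain ⟨f', hf', rfl⟩ := hz'
      exact ⟨f + f', fun u => add_mem (hf u) (hf' u),
        (Finsupp.sum_add_index' (by simp) (fun _ _ _ => mul_add _ _ _)).symm⟩
  · rintro ⟨f, hf, rfl⟩
    exact Submodule.finsuppSum_mem _ _ _ _ fun u _ =>
      Submodule.mul_mem_mul (Submodule.subset_span ⟨u.1, u.2, rfl⟩) (hf u)

lemma dropPrefix_sum_word_mul (f : {w : FreeMonoid ι // w.length = m} →₀ T k ι)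
    (u : {w : FreeMonoid ι // w.length = m}) :
    dropPrefix u.1 (f.sum fun v x => word k ι v.1 * x) = f u := by
  rw [map_finsuppSum, Finsupp.sum_eq_single u]
  · exact dropPrefix_word_mul u.1 (f u)
  · exact fun v _ hvu =>
      dropPrefix_word_mul_of_ne (u.2.trans v.2.symm) (fun h => hvu (Subtype.ext h.symm)) _
  · simp

lemma mem_wpow_mul_iff_dropPrefix_mem :
    z ∈ Wpow k ι m * X ↔ z ∈ Wpow k ι m * ⊤ ∧ ∀ u, u.length = m → dropPrefix u z ∈ X := by
  constructor
  · intro hz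
    refine ⟨mul_le_mul_right le_top (Wpow k ι m) hz, fun u hu => ?_⟩
    obtain ⟨f, hf, rfl⟩ := mem_wpow_mul_iff_exists_finsupp.mp hz
    simpa only [dropPrefix_sum_word_mul f ⟨u, hu⟩] using hf ⟨u, hu⟩
  · rintro ⟨hz, hX⟩
    obtain ⟨f, -, rfl⟩ := mem_wpow_mul_iff_exists_finsupp.mp hz
    refine mem_wpow_mul_iff_exists_finsupp.mpr ⟨f, fun u => ?_, rfl⟩
    simpa only [dropPrefix_sum_word_mul] using hX u.1 u.2

lemma wpow_mul_inf (m : ℕ) (X Y : Submodule k (T k ι)) :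
    Wpow k ι m * (X ⊓ Y) = Wpow k ι m * X ⊓ Wpow k ι m * Y := by
  refine le_antisymm (le_inf (mul_le_mul_right inf_le_left _) (mul_le_mul_right inf_le_right _))
    fun z hz => ?_
  obtain ⟨hzX, hzY⟩ := Submodule.mem_inf.mp hz
  rw [mem_wpow_mul_iff_dropPrefix_mem] at hzX hzY ⊢
  exact ⟨hzX.1, fun u hu => ⟨hzX.2 u hu, hzY.2 u hu⟩⟩

lemma le_of_wpow_mul_le_wpow_mul (h : Wpow k ι m * X ≤ Wpow k ι m * Y)
    (hX : X ≤ Wpow k ι 1 * ⊤) : X ≤ Y := by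
  cases isEmpty_or_nonempty ι with
  | inl _ =>
    rw [wpow_eq_bot one_ne_zero, Submodule.bot_mul, le_bot_iff] at hX
    exact hX ▸ bot_le
  | inr _ =>
    intro x hx
    let u : FreeMonoid ι := FreeMonoid.ofList (List.replicate m (Classical.arbitrary ι))
    have hu : u.length = m := List.length_replicate
    have hux : word k ι u * x ∈ Wpow k ι m * Y :=
      h (Submodule.mul_mem_mul (Submodule.subset_span ⟨u, hu, rfl⟩) hx)
    simpa only [dropPrefix_word_mul] using (mem_wpow_mul_iff_dropPrefix_mem.mp hux).2 u hu

end DropPrefix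

section Overlap

variable (R : Submodule k (T k ι))

def midSum (n : ℕ) : Submodule k (T k ι) :=
  ⨆ j ∈ Finset.Icc 1 (n - 1), Wpow k ι j * R * Wpow k ι (n - j)

def initSum (n : ℕ) : Submodule k (T k ι) :=
  ⨆ j ∈ Finset.range n, Wpow k ι j * R * Wpow k ι (n - j)

def overlap (n : ℕ) : Submodule k (T k ι) :=
  Wpow k ι n * R ⊓ initSum R n

lemma initSum_one : initSum R 1 = R * Wpow k ι 1 := by
  simp [initSum, wpow_zero]

lemma initSum_eq_sup_midSum {n : ℕ} (hn : n ≠ 0) :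
    initSum R n = R * Wpow k ι n ⊔ midSum R n := by
  have hrange : Finset.range n = insert 0 (Finset.Icc 1 (n - 1)) := by
    ext j; simp only [Finset.mem_range, Finset.mem_insert, Finset.mem_Icc]; omega
  rw [initSum, hrange, Finset.iSup_insert, wpow_zero, one_mul, Nat.sub_zero, midSum]

lemma midSum_succ (n : ℕ) : midSum R (n + 1) = Wpow k ι 1 * initSum R n := by
  have hIcc : Finset.Icc 1 (n + 1 - 1) = (Finset.range n).image (· + 1) := by
    ext j
    simp only [Finset.mem_Icc, Finset.mem_image, Finset.mem_range]
    exact ⟨fun hj => ⟨j - 1, by omega, by omega⟩, by rintro ⟨i, hi, rfl⟩; omega⟩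
  rw [midSum, hIcc, Finset.iSup_finset_image, initSum, Submodule.mul_iSup]
  refine iSup_congr fun j => ?_
  rw [Submodule.mul_iSup]
  refine iSup_congr fun _ => ?_
  rw [← mul_assoc, ← mul_assoc, wpow_mul_wpow, Nat.add_comm 1 j, Nat.add_sub_add_right]

lemma wpow_one_mul_overlap (n : ℕ) :
    Wpow k ι 1 * overlap R n = Wpow k ι (n + 1) * R ⊓ midSum R (n + 1) := by
  rw [overlap, wpow_mul_inf, wpow_mul_wpow_mul, midSum_succ, Nat.add_comm]

lemma overlap_succ (n : ℕ) :
    overlap R (n + 1) = Wpow k ι (n + 1) * R ⊓ (R * Wpow k ι (n + 1) ⊔ midSum R (n + 1)) := by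
  rw [overlap, initSum_eq_sup_midSum R n.succ_ne_zero]

lemma wpow_one_mul_overlap_le (n : ℕ) : Wpow k ι 1 * overlap R n ≤ overlap R (n + 1) := by
  rw [wpow_one_mul_overlap, overlap_succ]
  exact inf_le_inf_left _ le_sup_right

lemma wpow_mul_overlap_le (t n : ℕ) : Wpow k ι t * overlap R n ≤ overlap R (t + n) := by
  induction t with
  | zero => rw [wpow_zero, one_mul, Nat.zero_add]
  | succ t ih =>
    calc Wpow k ι (t + 1) * overlap R n = Wpow k ι 1 * (Wpow k ι t * overlap R n) := by
          rw [wpow_mul_wpow_mul, Nat.add_comm]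
      _ ≤ Wpow k ι 1 * overlap R (t + n) := mul_le_mul_right ih _
      _ ≤ overlap R (t + 1 + n) := by
          rw [Nat.add_right_comm]; exact wpow_one_mul_overlap_le R _

lemma overlap_le_wpow_one_mul_top {n : ℕ} (hn : n ≠ 0) : overlap R n ≤ Wpow k ι 1 * ⊤ := by
  obtain ⟨n, rfl⟩ := Nat.exists_eq_add_one_of_ne_zero hn
  calc overlap R (n + 1) ≤ Wpow k ι (1 + n) * R := by rw [Nat.add_comm]; exact inf_le_left
    _ ≤ Wpow k ι 1 * ⊤ := by rw [← wpow_mul_wpow, mul_assoc]; exact mul_le_mul_right le_top _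

/-- Descending from degree `N` to degree `n` multiplies both sides by `V^{⊗(N-n)}`,
which can be cancelled. -/
lemma overlap_eq_wpow_mul_overlap_one_of_le {N n : ℕ}
    (hN : overlap R N = Wpow k ι (N - 1) * overlap R 1) (hn : n ≠ 0) (hnN : n ≤ N) :
    overlap R n = Wpow k ι (n - 1) * overlap R 1 := by
  refine le_antisymm (le_of_wpow_mul_le_wpow_mul (m := N - n) ?_
    (overlap_le_wpow_one_mul_top R hn)) ?_
  · calc Wpow k ι (N - n) * overlap R n ≤ overlap R (N - n + n) := wpow_mul_overlap_le R _ _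
      _ = Wpow k ι (N - n) * (Wpow k ι (n - 1) * overlap R 1) := by
          rw [Nat.sub_add_cancel hnN, hN, wpow_mul_wpow_mul]; congr 2; omega
  · simpa only [Nat.sub_add_cancel (Nat.one_le_iff_ne_zero.mpr hn)]
      using wpow_mul_overlap_le R (n - 1) 1

lemma distribTriple_of_overlap_succ_eq {n : ℕ}
    (h : overlap R (n + 1) = Wpow k ι 1 * overlap R n) :
    DistribTriple k ι (Wpow k ι (n + 1) * R) (R * Wpow k ι (n + 1)) (midSum R (n + 1)) := by
  refine le_antisymm ?_ (sup_le (inf_le_inf_left _ le_sup_left) (inf_le_inf_left _ le_sup_right))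
  rw [← overlap_succ, h, wpow_one_mul_overlap]
  exact le_sup_right

lemma inf_le_of_overlap_eq {n : ℕ} (h : overlap R (n + 1) = Wpow k ι n * overlap R 1) :
    Wpow k ι (n + 1) * R ⊓ R * Wpow k ι (n + 1) ≤ Wpow k ι n * R * Wpow k ι 1 :=
  calc Wpow k ι (n + 1) * R ⊓ R * Wpow k ι (n + 1) ≤ overlap R (n + 1) := by
        rw [overlap_succ]; exact inf_le_inf_left _ le_sup_left
    _ = Wpow k ι n * overlap R 1 := h
    _ ≤ Wpow k ι n * R * Wpow k ι 1 := by
        rw [mul_assoc, overlap, initSum_one]; exact mul_le_mul_right inf_le_right _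

lemma wpow_mul_mul_wpow_one_le_initSum (n : ℕ) :
    Wpow k ι n * R * Wpow k ι 1 ≤ initSum R (n + 1) := by
  have h := le_iSup₂ (f := fun j (_ : j ∈ Finset.range (n + 1)) =>
    Wpow k ι j * R * Wpow k ι (n + 1 - j)) n (Finset.self_mem_range_succ n)
  rwa [Nat.add_sub_cancel_left] at h

lemma inf_le_wpow_one_mul_overlap {n : ℕ}
    (hI : Wpow k ι (n + 2) * R ⊓ R * Wpow k ι (n + 2) ≤ Wpow k ι (n + 1) * R * Wpow k ι 1) :
    Wpow k ι (n + 2) * R ⊓ R * Wpow k ι (n + 2) ≤ Wpow k ι 1 * overlap R (n + 1) :=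
  calc Wpow k ι (n + 2) * R ⊓ R * Wpow k ι (n + 2)
      ≤ Wpow k ι 1 * (Wpow k ι (n + 1) * R) ⊓ Wpow k ι 1 * (Wpow k ι n * R * Wpow k ι 1) := by
        rw [wpow_mul_wpow_mul, ← mul_assoc, ← mul_assoc, wpow_mul_wpow,
          Nat.add_comm 1 n, Nat.add_comm 1 (n + 1)]
        exact le_inf inf_le_left hI
    _ = Wpow k ι 1 * (Wpow k ι (n + 1) * R ⊓ Wpow k ι n * R * Wpow k ι 1) :=
        (wpow_mul_inf 1 _ _).symm
    _ ≤ Wpow k ι 1 * overlap R (n + 1) :=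
        mul_le_mul_right (inf_le_inf_left _ (wpow_mul_mul_wpow_one_le_initSum R n)) _

lemma overlap_succ_eq_of_distribTriple {n : ℕ}
    (hD : DistribTriple k ι (Wpow k ι (n + 2) * R) (R * Wpow k ι (n + 2)) (midSum R (n + 2)))
    (hI : Wpow k ι (n + 2) * R ⊓ R * Wpow k ι (n + 2) ≤ Wpow k ι (n + 1) * R * Wpow k ι 1) :
    overlap R (n + 2) = Wpow k ι 1 * overlap R (n + 1) := by
  refine le_antisymm ?_ (wpow_one_mul_overlap_le R (n + 1))
  rw [overlap_succ, hD, ← wpow_one_mul_overlap]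
  exact sup_le (inf_le_wpow_one_mul_overlap R hI) le_rfl

lemma ec_iff_forall_distribTriple {s : ℕ} (hs : 2 ≤ s) :
    EC k ι R s ↔ ∀ m, 2 ≤ m → m ≤ s - 1 →
      DistribTriple k ι (Wpow k ι m * R) (R * Wpow k ι m) (midSum R m) ∧
      Wpow k ι m * R ⊓ R * Wpow k ι m ≤ Wpow k ι (m - 1) * R * Wpow k ι 1 := by
  have hEC : EC k ι R s ↔ overlap R (s - 1) = Wpow k ι (s - 1 - 1) * overlap R 1 := by
    rw [EC, overlap, overlap, initSum_one, Nat.sub_sub]; rfl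
  rw [hEC]
  constructor
  · intro hN m hm hms
    obtain ⟨n, rfl⟩ : ∃ n, m = n + 1 := ⟨m - 1, by omega⟩
    have hn1 := overlap_eq_wpow_mul_overlap_one_of_le R hN (n.succ_ne_zero) hms
    have hn := overlap_eq_wpow_mul_overlap_one_of_le R hN (by omega : n ≠ 0) (by omega)
    refine ⟨distribTriple_of_overlap_succ_eq R ?_, inf_le_of_overlap_eq R hn1⟩
    rw [hn1, hn, wpow_mul_wpow_mul]
    congr 2; omega
  · intro hcond
    suffices ∀ n, 1 ≤ n → n ≤ s - 1 → overlap R n = Wpow k ι (n - 1) * overlap R 1 from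
      this (s - 1) (by omega) le_rfl
    intro n hn
    induction n, hn using Nat.le_induction with
    | base => intro; rw [Nat.sub_self, wpow_zero, one_mul]
    | succ n hn ih =>
      intro hns
      obtain ⟨n, rfl⟩ := Nat.exists_eq_add_one_of_ne_zero (Nat.one_le_iff_ne_zero.mp hn)
      obtain ⟨hD, hI⟩ := hcond (n + 2) (by omega) hns
      rw [overlap_succ_eq_of_distribTriple R hD hI, ih (by omega), wpow_mul_wpow_mul]
      congr 2; omega

end Overlap

variable (k ι)

theorem ec_iff_distributive (a b : ℕ) (ha : 2 ≤ a) (hab : a < b)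
    (Ra Rb : Submodule k (T k ι)) :
    (EC k ι Ra a ∧ EC k ι Rb b) ↔
      ((∀ m, 2 ≤ m → m ≤ a - 1 →
          DistribTriple k ι (Wpow k ι m * Ra) (Ra * Wpow k ι m)
            (⨆ j ∈ Finset.Icc 1 (m - 1), Wpow k ι j * Ra * Wpow k ι (m - j)) ∧
          (Wpow k ι m * Ra) ⊓ (Ra * Wpow k ι m) ≤ Wpow k ι (m - 1) * Ra * Wpow k ι 1) ∧
        (∀ h, 2 ≤ h → h ≤ b - 1 →
          DistribTriple k ι (Wpow k ι h * Rb) (Rb * Wpow k ι h)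
            (⨆ j ∈ Finset.Icc 1 (h - 1), Wpow k ι j * Rb * Wpow k ι (h - j)) ∧
          (Wpow k ι h * Rb) ⊓ (Rb * Wpow k ι h) ≤ Wpow k ι (h - 1) * Rb * Wpow k ι 1)) :=
  and_congr (ec_iff_forall_distribTriple Ra ha) (ec_iff_forall_distribTriple Rb (by omega))

end MK
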